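/- Let p ≥ 5 be a prime and set n := 2^(p−1). If, in the ring ZMod (2^p − 1) of integers modulo 2^p − 1, the element ∑_{k even, 0 ≤ k ≤ n/2} (k!)⁻¹ · ∏_{λ=0}^{k/2 − 1} ((4λ)² − 4⁻¹) is nonzero — where (k!)⁻¹ and 4⁻¹ denote inverses in ZMod (2^p − 1), the sum ranges over even k, and the product is empty (hence 1) when k = 0 — then 2^p − 1 is not prime (i.e., 2^p − 1 is a Mersenne composite). -/

import Mathlib

/-!
Put `M = 2^(p-3)`. Modulo `2^p - 1` we have `4⁻¹ = 16 M²`, so the `k = 2m` term of the sum is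
`(2m)!⁻¹ ∏_{l<m} 16 (l² - M²)`. Since `2 ∏_{l<m} (M² - l²) = (2m)! (C(M+m, 2m) + C(M+m-1, 2m))`,
twice the sum is `b_M(-16) + b_{M-1}(-16)`, where `bₙ(x) = ∑ₘ C(n+m, 2m) xᵐ` are the Morgan–Voyce
polynomials; by their recurrence this is the Vieta–Lucas value `C_M(-14)`. As `C_2(-14) = C_4(4)`
and `M` is a power of two, `C_M(-14) = C_{2^(p-2)}(4) = s_{p-2}` is the Lucas–Lehmer residue, which
vanishes when `2^p - 1` is prime.
-/

open Finset Polynomial Polynomial.Chebyshev Nat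

theorem Nat.choose_add_two_add_choose (n k : ℕ) :
    (n + 2).choose (k + 2) + n.choose (k + 2) = 2 * (n + 1).choose (k + 2) + n.choose k := by
  simp only [Nat.choose_succ_succ']
  ring

theorem Finset.sum_filter_even_range {M : Type*} [AddCommMonoid M] (f : ℕ → M) (K : ℕ) :
    ∑ k ∈ (range (K + 1)).filter (fun k => k % 2 = 0), f k = ∑ m ∈ range (K / 2 + 1), f (2 * m) := by
  have : (range (K + 1)).filter (fun k => k % 2 = 0) = (range (K / 2 + 1)).image (2 * ·) := by
    ext k
    simp only [mem_filter, mem_range, mem_image]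
    constructor
    · rintro ⟨hk, h2⟩
      exact ⟨k / 2, by omega, by omega⟩
    · rintro ⟨m, hm, rfl⟩
      omega
  rw [this, sum_image fun a _ b _ hab => by simpa using hab]

section MorganVoyce

variable {R : Type*} [CommRing R]

def morganVoyce (x : R) (n : ℕ) : R :=
  ∑ m ∈ range (n + 1), ((n + m).choose (2 * m) : R) * x ^ m

theorem morganVoyce_eq_sum_range (x : R) {n K : ℕ} (hK : n < K) :
    morganVoyce x n = ∑ m ∈ range K, ((n + m).choose (2 * m) : R) * x ^ m := by
  refine sum_subset (range_subset_range.2 hK) fun m _ hm => ?_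
  rw [Nat.choose_eq_zero_of_lt (by simp at hm; omega), Nat.cast_zero, zero_mul]

theorem morganVoyce_add_two (x : R) (n : ℕ) :
    morganVoyce x (n + 2) = (x + 2) * morganVoyce x (n + 1) - morganVoyce x n := by
  have hterm (m : ℕ) :
      ((n + 2 + (m + 1)).choose (2 * (m + 1)) : R) * x ^ (m + 1)
        + ((n + (m + 1)).choose (2 * (m + 1)) : R) * x ^ (m + 1)
      = 2 * (((n + 1 + (m + 1)).choose (2 * (m + 1)) : R) * x ^ (m + 1))
        + x * (((n + 1 + m).choose (2 * m) : R) * x ^ m) := by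
    have h := congrArg (Nat.cast : ℕ → R) (Nat.choose_add_two_add_choose (n + m + 1) (2 * m))
    push_cast at h
    rw [show n + 2 + (m + 1) = n + m + 1 + 2 by ring, show n + (m + 1) = n + m + 1 by ring,
      show n + 1 + (m + 1) = n + m + 1 + 1 by ring, show n + 1 + m = n + m + 1 by ring, mul_add_one]
    linear_combination x ^ (m + 1) * h
  suffices morganVoyce x (n + 2) + morganVoyce x n = (2 + x) * morganVoyce x (n + 1) by
    linear_combination this
  rw [add_mul]
  nth_rw 2 [morganVoyce_eq_sum_range x (n := n + 1) (K := n + 3) (by omega)]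
  rw [morganVoyce_eq_sum_range x (n := n + 2) (K := n + 4) (by omega),
    morganVoyce_eq_sum_range x (n := n) (K := n + 4) (by omega),
    morganVoyce_eq_sum_range x (n := n + 1) (K := n + 4) (by omega), ← sum_add_distrib,
    mul_sum, mul_sum, sum_range_succ', sum_range_succ' (fun m => 2 * _),
    sum_congr rfl fun m _ => hterm m, sum_add_distrib]
  norm_num
  ring

theorem chebyshevC_eval_add_two (x : R) (n : ℕ) :
    (C R (n + 1 : ℕ)).eval (x + 2) = morganVoyce x (n + 1) + morganVoyce x n := by
  induction n using Nat.twoStepInduction with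
  | zero => norm_num [morganVoyce, sum_range_succ]; ring
  | one => norm_num [morganVoyce, sum_range_succ, C_two]; ring
  | more n ih₀ ih₁ =>
    have hC : C R (n + 2 + 1 : ℕ) = X * C R (n + 1 + 1 : ℕ) - C R (n + 1 : ℕ) := by
      push_cast
      exact C_add_two R (n + 1)
    rw [hC, eval_sub, eval_mul, eval_X, ih₀, ih₁, morganVoyce_add_two x (n + 1),
      morganVoyce_add_two x n]
    ring

end MorganVoyce

section CentralProduct

variable {R : Type*} [CommRing R]

theorem descPochhammer_succ_eval_left (n : ℕ) (y : R) :
    (descPochhammer R (n + 1)).eval y = y * (descPochhammer R n).eval (y - 1) := by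
  rw [descPochhammer_succ_left, eval_mul, eval_X, eval_comp, eval_sub, eval_X, eval_one]

theorem prod_range_succ_sq_sub_sq (y : R) (m : ℕ) :
    ∏ l ∈ range (m + 1), (y ^ 2 - (l : R) ^ 2)
      = y * (descPochhammer R (2 * m + 1)).eval (y + m) := by
  induction m with
  | zero => norm_num [sq]
  | succ m ih =>
    rw [prod_range_succ, ih, show 2 * (m + 1) + 1 = 2 * m + 1 + 1 + 1 by ring,
      descPochhammer_succ_eval_left (2 * m + 1 + 1), descPochhammer_succ_eval (2 * m + 1),
      Nat.cast_succ, ← add_assoc, add_sub_cancel_right]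
    push_cast
    ring

theorem two_mul_prod_range_succ_sq_sub_sq (n m : ℕ) :
    2 * ∏ l ∈ range (m + 1), ((n : R) ^ 2 - (l : R) ^ 2)
      = (2 * m + 2)! * ((n + m + 1).choose (2 * m + 2) + (n + m).choose (2 * m + 2) : R) := by
  have hdesc (k : ℕ) : ((2 * m + 2)! * k.choose (2 * m + 2) : R)
      = (descPochhammer R (2 * m + 1 + 1)).eval (k : R) := by
    rw [descPochhammer_eval_eq_descFactorial, descFactorial_eq_factorial_mul_choose]
    push_cast; ring
  rw [mul_add, hdesc, hdesc, prod_range_succ_sq_sub_sq, descPochhammer_succ_eval_left (2 * m + 1),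
    descPochhammer_succ_eval (2 * m + 1)]
  push_cast
  ring_nf

end CentralProduct

theorem two_mul_sum_inv_factorial_mul_prod_eq_chebyshevC {F : Type*} [Field F] (a : F) (N : ℕ)
    (hN : ((2 * N)! : F) ≠ 0) :
    2 * ∑ m ∈ range (N + 1), ((2 * m)! : F)⁻¹ * ∏ l ∈ range m, a * ((l : F) ^ 2 - (N : F) ^ 2)
      = (C F N).eval (2 - a) := by
  cases N with
  | zero => simp
  | succ n =>
    have hterm (m : ℕ) (hm : m ∈ range (n + 1)) :
        2 * (((2 * (m + 1))! : F)⁻¹ * ∏ l ∈ range (m + 1), a * ((l : F) ^ 2 - ((n + 1 : ℕ) : F) ^ 2))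
          = ((n + 1 + (m + 1)).choose (2 * (m + 1)) : F) * (-a) ^ (m + 1)
            + ((n + (m + 1)).choose (2 * (m + 1)) : F) * (-a) ^ (m + 1) := by
      have hfact : ((2 * m + 2)! : F) ≠ 0 := fun h0 => hN <| zero_dvd_iff.1 <| h0 ▸
        Nat.cast_dvd_cast (factorial_dvd_factorial (by simp at hm; omega))
      have hprod : ∏ l ∈ range (m + 1), a * ((l : F) ^ 2 - ((n + 1 : ℕ) : F) ^ 2)
          = (-a) ^ (m + 1) * ∏ l ∈ range (m + 1), (((n + 1 : ℕ) : F) ^ 2 - (l : F) ^ 2) := by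
        rw [← card_range (m + 1), ← prod_const, card_range, ← prod_mul_distrib]
        exact prod_congr rfl fun l _ => by ring
      have h2 := two_mul_prod_range_succ_sq_sub_sq (R := F) (n + 1) m
      rw [hprod, show 2 * (m + 1) = 2 * m + 2 by ring, show n + 1 + (m + 1) = n + 1 + m + 1 by ring,
        show n + (m + 1) = n + 1 + m by ring]
      field_simp
      linear_combination (-a) ^ (m + 1) * h2
    rw [show 2 - a = -a + 2 by ring, chebyshevC_eval_add_two, morganVoyce,
      morganVoyce_eq_sum_range (-a) (n := n) (K := n + 2) (by omega), ← sum_add_distrib,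
      sum_range_succ', mul_add, mul_sum, sum_congr rfl hterm, sum_range_succ' _ (n + 1)]
    norm_num

theorem ZMod.natCast_factorial_ne_zero {P k : ℕ} (hP : P.Prime) (hk : k < P) :
    (k ! : ZMod P) ≠ 0 := by
  rw [Ne, ZMod.natCast_eq_zero_iff, hP.dvd_factorial]
  omega

theorem ZMod.inv_four_eq_sixteen_mul_two_pow_sq {p : ℕ} (hp : 3 ≤ p) :
    (4 : ZMod (2 ^ p - 1))⁻¹ = 16 * (2 ^ (p - 3)) ^ 2 := by
  have hone : (2 : ZMod (2 ^ p - 1)) ^ p = 1 := by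
    have := ZMod.natCast_self (2 ^ p - 1)
    rwa [Nat.cast_sub Nat.one_le_two_pow, Nat.cast_pow, Nat.cast_ofNat, Nat.cast_one,
      sub_eq_zero] at this
  refine ZMod.inv_eq_of_mul_eq_one _ _ _ ?_
  obtain ⟨r, rfl⟩ : ∃ r, p = r + 3 := ⟨p - 3, by omega⟩
  calc (4 : ZMod (2 ^ (r + 3) - 1)) * (16 * (2 ^ (r + 3 - 3)) ^ 2) = (2 ^ (r + 3)) ^ 2 := by
        rw [Nat.add_sub_cancel]; ring
    _ = 1 := by rw [hone, one_pow]

section LucasLehmer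

variable (R : Type*) [CommRing R]

theorem chebyshevC_two_pow_eval_four (i : ℕ) :
    (C R (2 ^ i : ℕ)).eval 4 = (LucasLehmer.s i : R) := by
  induction i with
  | zero => simp [LucasLehmer.s]
  | succ i ih =>
    rw [pow_succ', Nat.cast_mul, Nat.cast_ofNat, C_mul, eval_comp, ih, C_two]
    simp [LucasLehmer.s]

theorem chebyshevC_two_pow_succ_eval_neg_fourteen (i : ℕ) :
    (C R (2 ^ (i + 1) : ℕ)).eval (-14) = (LucasLehmer.s (i + 2) : R) := by
  rw [← chebyshevC_two_pow_eval_four, show ((2 ^ (i + 1) : ℕ) : ℤ) = 2 ^ i * 2 by push_cast; ring,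
    show ((2 ^ (i + 2) : ℕ) : ℤ) = 2 ^ i * 2 * 2 by push_cast; ring, C_mul, C_mul, C_mul,
    eval_comp, eval_comp, eval_comp, C_two]
  norm_num

end LucasLehmer

theorem LucasLehmer.s_cast_eq_zero_of_prime {p : ℕ} (hp : 3 ≤ p) (h : (mersenne p).Prime) :
    (LucasLehmer.s (p - 2) : ZMod (2 ^ p - 1)) = 0 := by
  obtain ⟨p, rfl⟩ : ∃ p', p = p' + 2 := ⟨p - 2, by omega⟩
  rw [Nat.add_sub_cancel, ← LucasLehmer.sZMod_eq_s]
  exact lucas_lehmer_necessity _ hp h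

theorem mersenne_composite_criterion_general (p : ℕ) (hp5 : 5 ≤ p)
    (n : ℕ) (hn : n = 2 ^ (p - 1))
    (h : (∑ k ∈ (Finset.range (n / 2 + 1)).filter (fun k => k % 2 = 0),
        ((Nat.factorial k : ZMod (2 ^ p - 1)))⁻¹ *
          ∏ l ∈ Finset.range (k / 2),
            ((4 * (l : ZMod (2 ^ p - 1))) ^ 2 - (4 : ZMod (2 ^ p - 1))⁻¹)) ≠ 0) :
    ¬ Nat.Prime (2 ^ p - 1) := by
  intro hQ
  have : Fact (2 ^ p - 1).Prime := ⟨hQ⟩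
  obtain ⟨q, rfl⟩ : ∃ q, p = q + 4 := ⟨p - 4, by omega⟩
  set M := 2 ^ (q + 1)
  have hMpos : 0 < M := by positivity
  have hpow : 2 ^ (q + 4) = 8 * M := by ring
  have hnM : n / 2 / 2 = M := by
    rw [hn, show q + 4 - 1 = q + 1 + 2 by omega, pow_add]
    omega
  have hfact : ((2 * M)! : ZMod (2 ^ (q + 4) - 1)) ≠ 0 :=
    ZMod.natCast_factorial_ne_zero hQ (by omega)
  have htwo : (2 : ZMod (2 ^ (q + 4) - 1)) ≠ 0 := by
    exact_mod_cast (ZMod.natCast_eq_zero_iff 2 (2 ^ (q + 4) - 1)).not.2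
      (Nat.not_dvd_of_pos_of_lt two_pos (by omega))
  have hs : (C (ZMod (2 ^ (q + 4) - 1)) M).eval (2 - 16) = 0 := by
    rw [show (2 : ZMod (2 ^ (q + 4) - 1)) - 16 = -14 by ring,
      chebyshevC_two_pow_succ_eval_neg_fourteen, show q + 2 = q + 4 - 2 by omega]
    exact LucasLehmer.s_cast_eq_zero_of_prime (by omega) hQ
  apply h
  rw [sum_filter_even_range, hnM]
  refine (mul_right_inj' htwo).1 ?_
  rw [mul_zero, ← hs, ← two_mul_sum_inv_factorial_mul_prod_eq_chebyshevC _ _ hfact]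
  refine congrArg (2 * ·) (sum_congr rfl fun m _ => ?_)
  rw [Nat.mul_div_cancel_left m two_pos, ZMod.inv_four_eq_sixteen_mul_two_pow_sq (by omega)]
  exact congrArg _ (prod_congr rfl fun l _ => by push_cast [M]; ring)

/-- Criterion for compositeness of Mersenne numbers. -/
theorem mersenne_composite_criterion (p : ℕ) (hp : Nat.Prime p) (hp5 : 5 ≤ p)
    (n : ℕ) (hn : n = 2 ^ (p - 1))
    (h : (∑ k ∈ (Finset.range (n / 2 + 1)).filter (fun k => k % 2 = 0),
        ((Nat.factorial k : ZMod (2 ^ p - 1)))⁻¹ *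
          ∏ l ∈ Finset.range (k / 2),
            ((4 * (l : ZMod (2 ^ p - 1))) ^ 2 - (4 : ZMod (2 ^ p - 1))⁻¹)) ≠ 0) :
    ¬ Nat.Prime (2 ^ p - 1) :=
  mersenne_composite_criterion_general p hp5 n hn h
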